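/- The category Sys of components and component morphisms (over a colimit-preserving sentence functor Sen) is cocomplete, and the forgetful functor U : Sys → Sig = Set³ preserves colimits. -/

import Mathlib

open CategoryTheory

/-- A component over a sentence functor `Sen`. -/
structure Component (Sen : Type ⥤ Type) where
  P : Type
  A : Type
  E : Type
  pres : A → Set (Sen.obj P)
  desc : A → Set (Sen.obj P)
  obs : E → Set A

/-- A component morphism. -/
structure CompHom {Sen : Type ⥤ Type} (C₁ C₂ : Component Sen) where
  σP : C₁.P → C₂.P
  σA : C₁.A → C₂.A
  σE : C₁.E → C₂.E
  hpres : ∀ a, Sen.map (TypeCat.ofHom σP) '' C₁.pres a ⊆ C₂.pres (σA a)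
  hdesc : ∀ a, Sen.map (TypeCat.ofHom σP) '' C₁.desc a ⊆ C₂.desc (σA a)
  hobs : ∀ e, σA '' C₁.obs e ⊆ C₂.obs (σE e)

@[ext] theorem CompHom.ext' {Sen : Type ⥤ Type} {C₁ C₂ : Component Sen}
    {f g : CompHom C₁ C₂} (h1 : f.σP = g.σP) (h2 : f.σA = g.σA) (h3 : f.σE = g.σE) :
    f = g := by
  cases f; cases g; simp_all

def CompHom.id {Sen : Type ⥤ Type} (C : Component Sen) : CompHom C C where
  σP := _root_.id
  σA := _root_.id
  σE := _root_.id
  hpres := by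
    intro a x hx
    obtain ⟨y, hy, rfl⟩ := hx
    have : Sen.map (TypeCat.ofHom (_root_.id : C.P → C.P)) y = y :=
        congrArg (fun (k : Sen.obj C.P ⟶ Sen.obj C.P) => k y) (Sen.map_id C.P)
    rwa [this]
  hdesc := by
    intro a x hx
    obtain ⟨y, hy, rfl⟩ := hx
    have : Sen.map (TypeCat.ofHom (_root_.id : C.P → C.P)) y = y :=
        congrArg (fun (k : Sen.obj C.P ⟶ Sen.obj C.P) => k y) (Sen.map_id C.P)
    rwa [this]
  hobs := by intro e x hx; simpa using hx

def CompHom.comp {Sen : Type ⥤ Type} {C₁ C₂ C₃ : Component Sen}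
    (f : CompHom C₁ C₂) (g : CompHom C₂ C₃) : CompHom C₁ C₃ where
  σP := g.σP ∘ f.σP
  σA := g.σA ∘ f.σA
  σE := g.σE ∘ f.σE
  hpres := by
    intro a x hx
    obtain ⟨y, hy, rfl⟩ := hx
    have hmap : Sen.map (TypeCat.ofHom (g.σP ∘ f.σP)) y
          = Sen.map (TypeCat.ofHom g.σP) (Sen.map (TypeCat.ofHom f.σP) y) :=
      congrArg (fun (k : Sen.obj C₁.P ⟶ Sen.obj C₃.P) => k y)
        (Sen.map_comp (X := C₁.P) (Y := C₂.P) (Z := C₃.P) (TypeCat.ofHom f.σP) (TypeCat.ofHom g.σP))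
    rw [hmap]
    exact g.hpres (f.σA a) ⟨_, f.hpres a ⟨y, hy, rfl⟩, rfl⟩
  hdesc := by
    intro a x hx
    obtain ⟨y, hy, rfl⟩ := hx
    have hmap : Sen.map (TypeCat.ofHom (g.σP ∘ f.σP)) y
          = Sen.map (TypeCat.ofHom g.σP) (Sen.map (TypeCat.ofHom f.σP) y) :=
      congrArg (fun (k : Sen.obj C₁.P ⟶ Sen.obj C₃.P) => k y)
        (Sen.map_comp (X := C₁.P) (Y := C₂.P) (Z := C₃.P) (TypeCat.ofHom f.σP) (TypeCat.ofHom g.σP))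
    rw [hmap]
    exact g.hdesc (f.σA a) ⟨_, f.hdesc a ⟨y, hy, rfl⟩, rfl⟩
  hobs := by
    intro e x hx
    obtain ⟨y, hy, rfl⟩ := hx
    exact g.hobs (f.σE e) ⟨_, f.hobs e ⟨y, hy, rfl⟩, rfl⟩

instance Sys.category (Sen : Type ⥤ Type) : Category (Component Sen) where
  Hom := CompHom
  id := CompHom.id
  comp := CompHom.comp
  id_comp := by intros; rfl
  comp_id := by intros; rfl
  assoc := by intros; rfl

open Limits

/-- The forgetful functor `U : Sys → Sig = Set³`. -/
def U (Sen : Type ⥤ Type) : Component Sen ⥤ Type × Type × Type where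
  obj C := (C.P, C.A, C.E)
  map f := (TypeCat.ofHom f.σP, TypeCat.ofHom f.σA, TypeCat.ofHom f.σE)
  map_id := by intros; rfl
  map_comp := by intros; rfl

/-!
Colimits in `Sys` are formed componentwise in `Set` on `P`, `A` and `E`, and the relations
`π`, `δ`, `ε` of the colimit are the unions of the images of those of the diagram along the
colimit injections. Being the least relations that make the injections morphisms, they are
respected by the maps induced by any cocone. As `U` is faithful and sends this cocone to a
colimit of sets, it is a colimit cocone, preserved by `U` by construction.
-/

namespace CategoryTheory.Limits

variable {J C D : Type*} [Category* J] [Category* C] [Category* D]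

def isColimitOfFstSnd {F : J ⥤ C × D} (c : Cocone F)
    (h₁ : IsColimit ((Prod.fst C D).mapCocone c))
    (h₂ : IsColimit ((Prod.snd C D).mapCocone c)) :
    IsColimit c where
  desc s := (h₁.desc ((Prod.fst C D).mapCocone s), h₂.desc ((Prod.snd C D).mapCocone s))
  fac _ j := Prod.ext (h₁.fac _ j) (h₂.fac _ j)
  uniq s m hm :=
    Prod.ext (h₁.uniq ((Prod.fst C D).mapCocone s) m.1 fun j => congrArg (·.1) (hm j))
    (h₂.uniq ((Prod.snd C D).mapCocone s) m.2 fun j => congrArg (·.2) (hm j))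

end CategoryTheory.Limits

namespace Component

variable {Sen : Type ⥤ Type}

instance : (U Sen).Faithful where
  map_injective {X Y} _ _ h :=
    let component (p : (U Sen).obj X ⟶ (U Sen).obj Y) := (⇑p.1, ⇑p.2.1, ⇑p.2.2)
    have h := congrArg component h
    CompHom.ext' (congrArg Prod.fst h) (congrArg (·.2.1) h) (congrArg (·.2.2) h)

abbrev projP (Sen : Type ⥤ Type) : Component Sen ⥤ Type := U Sen ⋙ CategoryTheory.Prod.fst _ _

abbrev projA (Sen : Type ⥤ Type) : Component Sen ⥤ Type :=
  U Sen ⋙ CategoryTheory.Prod.snd _ _ ⋙ CategoryTheory.Prod.fst _ _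

abbrev projE (Sen : Type ⥤ Type) : Component Sen ⥤ Type :=
  U Sen ⋙ CategoryTheory.Prod.snd _ _ ⋙ CategoryTheory.Prod.snd _ _

section Colimit

variable {J : Type} [SmallCategory J] (F : J ⥤ Component Sen)

def colimitRel (r : ∀ X : Component Sen, X.A → Set (Sen.obj X.P))
    (a : colimit (F ⋙ projA Sen)) : Set (Sen.obj (colimit (F ⋙ projP Sen))) :=
  {x | ∃ j aj, colimit.ι (F ⋙ projA Sen) j aj = a ∧
    x ∈ Sen.map (colimit.ι (F ⋙ projP Sen) j) '' r (F.obj j) aj}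

noncomputable def colimitComponent : Component Sen where
  P := colimit (F ⋙ projP Sen)
  A := colimit (F ⋙ projA Sen)
  E := colimit (F ⋙ projE Sen)
  pres := colimitRel F pres
  desc := colimitRel F desc
  obs e := {a | ∃ j ej, colimit.ι (F ⋙ projE Sen) j ej = e ∧
    a ∈ colimit.ι (F ⋙ projA Sen) j '' (F.obj j).obs ej}

noncomputable def colimitCocone : Cocone F where
  pt := colimitComponent F
  ι.app j :=
    { σP := colimit.ι (F ⋙ projP Sen) j
      σA := colimit.ι (F ⋙ projA Sen) j
      σE := colimit.ι (F ⋙ projE Sen) j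
      hpres a _ hx := ⟨j, a, rfl, hx⟩
      hdesc a _ hx := ⟨j, a, rfl, hx⟩
      hobs e _ ha := ⟨j, e, rfl, ha⟩ }
  ι.naturality _ _ f := CompHom.ext' (funext (colimit.w_apply (F ⋙ projP Sen) f))
    (funext (colimit.w_apply (F ⋙ projA Sen) f)) (funext (colimit.w_apply (F ⋙ projE Sen) f))

noncomputable def isColimitMapCoconeColimitCocone :
    IsColimit ((U Sen).mapCocone (colimitCocone F)) :=
  isColimitOfFstSnd _ (colimit.isColimit (F ⋙ projP Sen))
    (isColimitOfFstSnd _ (colimit.isColimit (F ⋙ projA Sen))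
      (colimit.isColimit (F ⋙ projE Sen)))

variable {F}

lemma image_colimitRel_subset (r : ∀ X : Component Sen, X.A → Set (Sen.obj X.P))
    (s : Cocone F)
    (hr : ∀ j a, Sen.map (TypeCat.ofHom (s.ι.app j).σP) '' r (F.obj j) a ⊆
      r s.pt ((s.ι.app j).σA a))
    (a : colimit (F ⋙ projA Sen)) :
    Sen.map (colimit.desc (F ⋙ projP Sen) ((projP Sen).mapCocone s)) '' colimitRel F r a ⊆
      r s.pt (colimit.desc (F ⋙ projA Sen) ((projA Sen).mapCocone s) a) := by
  rintro _ ⟨_, ⟨j, aj, rfl, y, hy, rfl⟩, rfl⟩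
  rw [← Functor.map_comp_apply, colimit.ι_desc, colimit.ι_desc_apply]
  exact hr j aj ⟨y, hy, rfl⟩

noncomputable def colimitCoconeDesc (s : Cocone F) : colimitComponent F ⟶ s.pt where
  σP := colimit.desc (F ⋙ projP Sen) ((projP Sen).mapCocone s)
  σA := colimit.desc (F ⋙ projA Sen) ((projA Sen).mapCocone s)
  σE := colimit.desc (F ⋙ projE Sen) ((projE Sen).mapCocone s)
  hpres := image_colimitRel_subset pres s fun j => (s.ι.app j).hpres
  hdesc := image_colimitRel_subset desc s fun j => (s.ι.app j).hdesc
  hobs := by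
    rintro _ _ ⟨_, ⟨j, ej, rfl, aj, haj, rfl⟩, rfl⟩
    rw [colimit.ι_desc_apply, colimit.ι_desc_apply]
    exact (s.ι.app j).hobs ej ⟨aj, haj, rfl⟩

variable (F)

noncomputable def colimitCoconeIsColimit : IsColimit (colimitCocone F) :=
  IsColimit.ofFaithful (U Sen) (isColimitMapCoconeColimitCocone F) colimitCoconeDesc
    fun _ => Prod.ext rfl (Prod.ext rfl rfl)

end Colimit

instance : HasColimits (Component Sen) where
  has_colimits_of_shape _ _ :=
    { has_colimit F := ⟨⟨⟨_, colimitCoconeIsColimit F⟩⟩⟩ }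

instance : PreservesColimits (U Sen) where
  preservesColimitsOfShape :=
    { preservesColimit := preservesColimit_of_preserves_colimit_cocone
        (colimitCoconeIsColimit _) (isColimitMapCoconeColimitCocone _) }

end Component

theorem sys_cocomplete_and_U_preserves_colimits_general (Sen : Type ⥤ Type) :
    HasColimits (Component Sen) ∧ Nonempty (PreservesColimits (U Sen)) :=
  ⟨inferInstance, ⟨inferInstance⟩⟩

/-- the category `Sys` of components over a colimit-preserving
sentence functor `Sen` is cocomplete, and the forgetful functor
`U : Sys → Sig = Set³` preserves colimits. -/
theorem sys_cocomplete_and_U_preserves_colimits (Sen : Type ⥤ Type)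
    [PreservesColimits Sen] :
    HasColimits (Component Sen) ∧ Nonempty (PreservesColimits (U Sen)) :=
  sys_cocomplete_and_U_preserves_colimits_general Sen
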